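/- Suppose |I_k| ≥ 3 for all k ∈ K. Choose α > 0 such that 4α π_i ⪯ B_i for all i, and set Z_i = α π_i. Then for every r ∈ (0,1] and every i ∈ I, r Z_i ≺_{H_i} F_i(rZ); in particular rZ ⪯ F(rZ). -/

import Mathlib

open Matrix BigOperators Filter Topology

/-- Orthogonal projection onto the coordinate subspace determined by `S`. -/
noncomputable def proj (K : Type*) [Fintype K] [DecidableEq K] (S : Finset K) :
    Matrix K K ℝ :=
  Matrix.diagonal (fun k => if k ∈ S then (1 : ℝ) else 0)

/-- `B ∈ S_≻^{H}` : symmetric nonnegative definite, vanishing on vectors orthogonal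
to the coordinate subspace `H` given by `S`, and strictly positive definite on `H`. -/
def SPDOn {K : Type*} [Fintype K] [DecidableEq K] (S : Finset K) (B : Matrix K K ℝ) : Prop :=
  B.PosSemidef ∧
  (∀ x : K → ℝ, (∀ j, j ∉ S → x j = 0) → x ≠ 0 → 0 < x ⬝ᵥ (B *ᵥ x)) ∧
  (∀ x : K → ℝ, (∀ j, j ∈ S → x j = 0) → B *ᵥ x = 0)

/-- The inverse of `B` computed on the coordinate subspace given by `S`, extended by zero
(`B^{-H}` in the paper). -/
noncomputable def invOn {K : Type*} [Fintype K] [DecidableEq K] (S : Finset K)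
    (B : Matrix K K ℝ) : Matrix K K ℝ :=
  proj K S * (B + proj K Sᶜ)⁻¹ * proj K S

/-- `A ≺_{H} B` : the difference `B - A` belongs to `S_≻^{H}`. -/
def ltOn {K : Type*} [Fintype K] [DecidableEq K] (S : Finset K) (A B : Matrix K K ℝ) : Prop :=
  SPDOn S (B - A)

/-- The best-response map `F_i(X) = (B_i^{-H_i} + π_i (X_{-i})⁻¹ π_i)^{-H_i}`. -/
noncomputable def Fmap {I K : Type*} [Fintype I] [DecidableEq I] [Fintype K] [DecidableEq K]
    (Ki : I → Finset K) (B : I → Matrix K K ℝ) (X : I → Matrix K K ℝ) (i : I) :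
    Matrix K K ℝ :=
  invOn (Ki i) (invOn (Ki i) (B i) +
    proj K (Ki i) * (∑ j ∈ Finset.univ.erase i, X j)⁻¹ * proj K (Ki i))

/-!
On `H_i` the matrix `F_i(rZ)⁻¹` is `B_i⁻¹ + (rZ_{-i})⁻¹` (compressed to `H_i`). Since
`B_i ⪰ 4α` on `H_i`, and every coordinate lies in at least two of the `H_j` with `j ≠ i`, so that
`rZ_{-i} ⪰ 2rα`, the antitonicity of the inverse gives `F_i(rZ)⁻¹ ⪯ (4α)⁻¹ + (2rα)⁻¹` on `H_i`.
Inverting once more, `F_i(rZ) ⪰ 4rα / (r + 2) ≻ rα` on `H_i` for `r ≤ 1`. Both inversions go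
through the variational formula `x ⬝ A⁻¹ x = max_y (2 x ⬝ y - y ⬝ A y)` for `A ≻ 0`.
-/

open Finset

namespace Matrix

variable {K : Type*} [Fintype K]

lemma IsHermitian.dotProduct_mulVec_comm {A : Matrix K K ℝ} (hA : A.IsHermitian) (x y : K → ℝ) :
    x ⬝ᵥ A *ᵥ y = A *ᵥ x ⬝ᵥ y := by
  rw [dotProduct_mulVec, ← mulVec_transpose, ← conjTranspose_eq_transpose_of_trivial, hA.eq]

variable [DecidableEq K]

lemma PosDef.two_mul_dotProduct_sub_le_dotProduct_inv_mulVec {A : Matrix K K ℝ} (hA : A.PosDef)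
    (x y : K → ℝ) : 2 * (x ⬝ᵥ y) - y ⬝ᵥ A *ᵥ y ≤ x ⬝ᵥ A⁻¹ *ᵥ x := by
  have hsq : 0 ≤ (x - A *ᵥ y) ⬝ᵥ A⁻¹ *ᵥ (x - A *ᵥ y) := by
    simpa only [star_trivial] using hA.inv.posSemidef.dotProduct_mulVec_nonneg (x - A *ᵥ y)
  have hinv : A⁻¹ *ᵥ (x - A *ᵥ y) = A⁻¹ *ᵥ x - y := by
    rw [mulVec_sub, mulVec_mulVec, nonsing_inv_mul _ hA.det_pos.ne'.isUnit, one_mulVec]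
  have hcross : A *ᵥ y ⬝ᵥ A⁻¹ *ᵥ x = y ⬝ᵥ x := by
    rw [← hA.isHermitian.dotProduct_mulVec_comm, mulVec_mulVec,
      mul_nonsing_inv _ hA.det_pos.ne'.isUnit, one_mulVec]
  rw [hinv, sub_dotProduct, dotProduct_sub, dotProduct_sub, hcross, dotProduct_comm (A *ᵥ y) y,
    dotProduct_comm y x] at hsq
  linarith

lemma PosDef.inv_mul_dotProduct_le_dotProduct_inv_mulVec {A : Matrix K K ℝ} (hA : A.PosDef)
    {c : ℝ} (hc : 0 < c) {x : K → ℝ} (hx : x ⬝ᵥ A *ᵥ x ≤ c * (x ⬝ᵥ x)) :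
    c⁻¹ * (x ⬝ᵥ x) ≤ x ⬝ᵥ A⁻¹ *ᵥ x := by
  have h := hA.two_mul_dotProduct_sub_le_dotProduct_inv_mulVec x (c⁻¹ • x)
  rw [mulVec_smul, dotProduct_smul, smul_dotProduct, dotProduct_smul, smul_eq_mul, smul_eq_mul,
    smul_eq_mul] at h
  have hquad : c⁻¹ * (c⁻¹ * (x ⬝ᵥ A *ᵥ x)) ≤ c⁻¹ * (x ⬝ᵥ x) := by
    calc c⁻¹ * (c⁻¹ * (x ⬝ᵥ A *ᵥ x)) ≤ c⁻¹ * (c⁻¹ * (c * (x ⬝ᵥ x))) := by gcongr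
      _ = c⁻¹ * (x ⬝ᵥ x) := by field_simp
  linarith

end Matrix

section Projection

variable {K : Type*} [Fintype K] [DecidableEq K]

lemma proj_mulVec_apply (S : Finset K) (x : K → ℝ) (k : K) :
    (proj K S *ᵥ x) k = if k ∈ S then x k else 0 := by
  simp [proj, mulVec_diagonal, ite_mul]

lemma proj_mulVec_eq_self {S : Finset K} {x : K → ℝ} (hx : ∀ j, j ∉ S → x j = 0) :
    proj K S *ᵥ x = x := by
  funext k
  rw [proj_mulVec_apply]
  split_ifs with hk
  · rfl
  · exact (hx k hk).symm

lemma proj_mulVec_eq_zero {S : Finset K} {x : K → ℝ} (hx : ∀ j, j ∈ S → x j = 0) :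
    proj K S *ᵥ x = 0 := by
  funext k
  rw [proj_mulVec_apply]
  split_ifs with hk
  · exact hx k hk
  · rfl

lemma proj_mulVec_apply_of_notMem (S : Finset K) (x : K → ℝ) {j : K} (hj : j ∉ S) :
    (proj K S *ᵥ x) j = 0 := by
  rw [proj_mulVec_apply, if_neg hj]

lemma proj_isHermitian (S : Finset K) : (proj K S).IsHermitian :=
  isHermitian_diagonal _

lemma proj_posSemidef (S : Finset K) : (proj K S).PosSemidef :=
  PosSemidef.diagonal fun k => by dsimp only; split_ifs <;> norm_num

lemma dotProduct_proj_mulVec_self (S : Finset K) (x : K → ℝ) :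
    x ⬝ᵥ proj K S *ᵥ x = ∑ k ∈ S, x k ^ 2 := by
  simp only [dotProduct, proj_mulVec_apply, mul_ite, mul_zero, ← pow_two, sum_ite_mem, univ_inter]

lemma proj_mulVec_dotProduct_proj_mulVec (S : Finset K) (x : K → ℝ) :
    proj K S *ᵥ x ⬝ᵥ proj K S *ᵥ x = x ⬝ᵥ proj K S *ᵥ x := by
  rw [← (proj_isHermitian S).dotProduct_mulVec_comm, mulVec_mulVec]
  congr 2
  simp [proj, diagonal_mul_diagonal]

lemma dotProduct_proj_mul_mul_proj_mulVec (S : Finset K) (A : Matrix K K ℝ) (x : K → ℝ) :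
    x ⬝ᵥ (proj K S * A * proj K S) *ᵥ x = proj K S *ᵥ x ⬝ᵥ A *ᵥ (proj K S *ᵥ x) := by
  rw [← mulVec_mulVec, ← mulVec_mulVec, (proj_isHermitian S).dotProduct_mulVec_comm]

lemma sum_proj_eq_diagonal {I : Type*} (T : Finset I) (S : I → Finset K) :
    ∑ j ∈ T, proj K (S j) = diagonal fun k => (#{j ∈ T | k ∈ S j} : ℝ) := by
  ext k l
  rcases eq_or_ne k l with rfl | hkl
  · simp [proj, Matrix.sum_apply, sum_boole]
  · simp [proj, Matrix.sum_apply, diagonal_apply_ne _ hkl]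

lemma posSemidef_diagonal_sub_smul_proj {d : K → ℝ} {c : ℝ} (hc : 0 ≤ c) (hd : ∀ k, c ≤ d k)
    (S : Finset K) : (diagonal d - c • proj K S).PosSemidef := by
  rw [proj, ← diagonal_smul, diagonal_sub]
  refine PosSemidef.diagonal fun k => ?_
  simp only [Pi.smul_apply, smul_eq_mul, mul_ite, mul_one, mul_zero, Pi.zero_apply]
  split_ifs <;> linarith [hd k]

end Projection

section SubspaceForms

variable {K : Type*} [Fintype K] [DecidableEq K]

lemma Matrix.PosDef.dotProduct_inv_mulVec_le {A : Matrix K K ℝ} (hA : A.PosDef) {c : ℝ}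
    (hc : 0 < c) {S : Finset K} (hAS : (A - c • proj K S).PosSemidef) {x : K → ℝ}
    (hx : ∀ j, j ∉ S → x j = 0) : x ⬝ᵥ A⁻¹ *ᵥ x ≤ c⁻¹ * (x ⬝ᵥ x) := by
  set y := A⁻¹ *ᵥ x
  set u := proj K S *ᵥ y
  have hAy : A *ᵥ y = x := by
    rw [mulVec_mulVec, mul_nonsing_inv _ hA.det_pos.ne'.isUnit, one_mulVec]
  have hxu : x ⬝ᵥ u = x ⬝ᵥ y := by
    rw [(proj_isHermitian S).dotProduct_mulVec_comm, proj_mulVec_eq_self hx]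
  have hlower : c * (u ⬝ᵥ u) ≤ x ⬝ᵥ y := by
    have h := hAS.dotProduct_mulVec_nonneg y
    rw [star_trivial, sub_mulVec, dotProduct_sub, smul_mulVec, dotProduct_smul, smul_eq_mul, hAy,
      ← proj_mulVec_dotProduct_proj_mulVec, dotProduct_comm y x] at h
    linarith
  -- completing the square: `0 ≤ ‖x - c u‖²` together with `hlower` bounds `x ⬝ᵥ y`
  have hsq : 0 ≤ (x - c • u) ⬝ᵥ (x - c • u) := dotProduct_self_star_nonneg _
  simp only [sub_dotProduct, dotProduct_sub, smul_dotProduct, dotProduct_smul, smul_eq_mul,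
    dotProduct_comm u x, hxu] at hsq
  rw [le_inv_mul_iff₀ hc]
  nlinarith

lemma SPDOn.posDef_add_proj_compl {S : Finset K} {A : Matrix K K ℝ} (hA : SPDOn S A) :
    (A + proj K Sᶜ).PosDef := by
  refine PosDef.of_dotProduct_mulVec_pos (hA.1.isHermitian.add (proj_isHermitian _)) fun x hx => ?_
  rw [star_trivial, add_mulVec, dotProduct_add, dotProduct_proj_mulVec_self]
  by_cases hsupp : ∀ j, j ∉ S → x j = 0
  · have hA_pos := hA.2.1 x hsupp hx
    have : 0 ≤ ∑ k ∈ Sᶜ, x k ^ 2 := sum_nonneg fun k _ => sq_nonneg (x k)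
    linarith
  · push Not at hsupp
    obtain ⟨j, hjS, hj⟩ := hsupp
    have hA_nonneg : 0 ≤ x ⬝ᵥ A *ᵥ x := by simpa using hA.1.dotProduct_mulVec_nonneg x
    have : 0 < ∑ k ∈ Sᶜ, x k ^ 2 :=
      sum_pos' (fun k _ => sq_nonneg (x k)) ⟨j, mem_compl.mpr hjS, by positivity⟩
    linarith

lemma spdOn_proj_mul_mul_proj_sub_smul_proj {S : Finset K} {A : Matrix K K ℝ}
    (hA : A.IsHermitian) {c : ℝ}
    (hpos : ∀ x : K → ℝ, (∀ j, j ∉ S → x j = 0) → x ≠ 0 → c * (x ⬝ᵥ x) < x ⬝ᵥ A *ᵥ x) :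
    SPDOn S (proj K S * A * proj K S - c • proj K S) := by
  have hquad : ∀ x : K → ℝ, x ⬝ᵥ (proj K S * A * proj K S - c • proj K S) *ᵥ x =
      proj K S *ᵥ x ⬝ᵥ A *ᵥ (proj K S *ᵥ x) - c * (proj K S *ᵥ x ⬝ᵥ proj K S *ᵥ x) := by
    intro x
    rw [sub_mulVec, dotProduct_sub, dotProduct_proj_mul_mul_proj_mulVec, smul_mulVec,
      dotProduct_smul, smul_eq_mul, proj_mulVec_dotProduct_proj_mulVec]
  have hherm : (proj K S * A * proj K S - c • proj K S).IsHermitian := by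
    have hPAP := isHermitian_mul_mul_conjTranspose (proj K S) hA
    rw [(proj_isHermitian S).eq] at hPAP
    exact hPAP.sub ((proj_isHermitian S).smul (IsSelfAdjoint.all c))
  refine ⟨PosSemidef.of_dotProduct_mulVec_nonneg hherm fun x => ?_, fun x hx hx0 => ?_,
    fun x hx => ?_⟩
  · rw [star_trivial, hquad]
    by_cases hPx : proj K S *ᵥ x = 0
    · simp [hPx]
    · exact (sub_pos.mpr (hpos _ (fun j => proj_mulVec_apply_of_notMem S x) hPx)).le
  · rw [hquad, proj_mulVec_eq_self hx]
    exact sub_pos.mpr (hpos x hx hx0)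
  · rw [sub_mulVec, ← mulVec_mulVec, smul_mulVec, proj_mulVec_eq_zero hx]
    simp

end SubspaceForms

section BestResponse

variable {K : Type*} [Fintype K] [DecidableEq K]

lemma ltOn_smul_proj_invOn {S : Finset K} {B W : Matrix K K ℝ} (hB : SPDOn S B) (hW : W.PosDef)
    {a b c : ℝ} (ha : 0 < a) (hb : 0 < b) (hBa : (B - a • proj K S).PosSemidef)
    (hWb : (W - b • proj K S).PosSemidef) (hc : c < (a⁻¹ + b⁻¹)⁻¹) :
    ltOn S (c • proj K S) (invOn S (invOn S B + proj K S * W⁻¹ * proj K S)) := by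
  set P := proj K S
  set M := B + proj K Sᶜ
  have hM : M.PosDef := hB.posDef_add_proj_compl
  have hMa : (M - a • P).PosSemidef := by
    simpa only [M, add_sub_right_comm] using hBa.add (proj_posSemidef Sᶜ)
  have hN : (M⁻¹ + W⁻¹).PosDef := hM.inv.add hW.inv
  have hPNP : SPDOn S (P * (M⁻¹ + W⁻¹) * P) := by
    simpa using spdOn_proj_mul_mul_proj_sub_smul_proj (c := 0) hN.isHermitian
      fun x _ hx => by simpa using hN.dotProduct_mulVec_pos hx
  have hG := hPNP.posDef_add_proj_compl
  have hinner : invOn S B + P * W⁻¹ * P = P * (M⁻¹ + W⁻¹) * P := by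
    simp only [invOn, mul_add, add_mul, P, M]
  rw [ltOn, hinner, invOn]
  refine spdOn_proj_mul_mul_proj_sub_smul_proj hG.inv.isHermitian fun x hx hx0 => ?_
  have hGx : x ⬝ᵥ (P * (M⁻¹ + W⁻¹) * P + proj K Sᶜ) *ᵥ x ≤ (a⁻¹ + b⁻¹) * (x ⬝ᵥ x) := by
    rw [add_mulVec, dotProduct_add, dotProduct_proj_mul_mul_proj_mulVec, proj_mulVec_eq_self hx,
      proj_mulVec_eq_zero (fun j hj => hx j (mem_compl.mp hj)), dotProduct_zero, add_zero,
      add_mulVec, dotProduct_add, add_mul]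
    exact add_le_add (hM.dotProduct_inv_mulVec_le ha hMa hx) (hW.dotProduct_inv_mulVec_le hb hWb hx)
  have hx_pos : 0 < x ⬝ᵥ x := by simpa using dotProduct_star_self_pos_iff.mpr hx0
  calc c * (x ⬝ᵥ x) < (a⁻¹ + b⁻¹)⁻¹ * (x ⬝ᵥ x) := by gcongr
    _ ≤ _ := hG.inv_mul_dotProduct_le_dotProduct_inv_mulVec (by positivity) hGx

end BestResponse

lemma Finset.le_card_filter_erase {ι : Type*} [DecidableEq ι] {s : Finset ι} {p : ι → Prop}
    [DecidablePred p] {n : ℕ} (h : n + 1 ≤ #{j ∈ s | p j}) (i : ι) :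
    n ≤ #{j ∈ s.erase i | p j} := by
  rw [filter_erase]
  have := pred_card_le_card_erase (s := {j ∈ s | p j}) (a := i)
  omega

/-- Sub-solution: with `|I_k| ≥ 3`, `α > 0` such that `4α π_i ⪯ B_i`, and `Z_i = α π_i`,
for every `r ∈ (0,1]` one has `r Z_i ≺_{H_i} F_i(rZ)`; in particular `rZ ⪯ F(rZ)`. -/
theorem stmt_6 {I K : Type*} [Fintype I] [DecidableEq I] [Fintype K] [DecidableEq K]
    (Ki : I → Finset K)
    (hacc : ∀ k : K, 3 ≤ (Finset.univ.filter (fun i : I => k ∈ Ki i)).card)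
    (B : I → Matrix K K ℝ) (hB : ∀ i, SPDOn (Ki i) (B i))
    (α : ℝ) (hα : 0 < α)
    (hαB : ∀ i, (B i - (4 * α) • proj K (Ki i)).PosSemidef)
    (Z : I → Matrix K K ℝ) (hZ : ∀ i, Z i = α • proj K (Ki i))
    (r : ℝ) (hr : r ∈ Set.Ioc (0 : ℝ) 1) :
    (∀ i, ltOn (Ki i) (r • Z i) (Fmap Ki B (fun j => r • Z j) i)) ∧
    (∀ i, (Fmap Ki B (fun j => r • Z j) i - r • Z i).PosSemidef) := by
  obtain ⟨hr0, hr1⟩ := hr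
  have hrα : 0 < r * α := mul_pos hr0 hα
  have hlt : ∀ i, ltOn (Ki i) (r • Z i) (Fmap Ki B (fun j => r • Z j) i) := by
    intro i
    set d : K → ℝ := fun k => r * α * #{j ∈ univ.erase i | k ∈ Ki j}
    have hd : ∀ k, 2 * (r * α) ≤ d k := fun k => by
      have : (2 : ℝ) ≤ #{j ∈ univ.erase i | k ∈ Ki j} := by
        exact_mod_cast Finset.le_card_filter_erase (hacc k) i
      nlinarith
    have hW : ∑ j ∈ univ.erase i, r • Z j = diagonal d := by
      simp only [hZ, smul_smul, ← smul_sum, sum_proj_eq_diagonal, ← diagonal_smul]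
      rfl
    rw [hZ, smul_smul, Fmap, hW]
    refine ltOn_smul_proj_invOn (hB i) (posDef_diagonal_iff.mpr fun k => by linarith [hd k])
      (by linarith) (by linarith) (hαB i) (posSemidef_diagonal_sub_smul_proj (by linarith) hd _) ?_
    rw [show (4 * α)⁻¹ + (2 * (r * α))⁻¹ = (r + 2) / (4 * (r * α)) by field_simp; ring, inv_div,
      lt_div_iff₀ (by linarith)]
    nlinarith
  exact ⟨hlt, fun i => (hlt i).1⟩
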